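/- arXiv:2410.13643 — 8 statements merged into one kernel-verified Lean document; each statement's English description precedes it below -/
import Mathlib

section
/- Let X be a finite nonempty type, Q : ℝ → X → X → ℝ a time-dependent rate family, I ⊆ ℝ, and α > 0. Suppose V : ℝ → X → ℝ is such that for every t ∈ I and x ∈ X, the function s ↦ V s x is differentiable at t with derivative α · ∑_{y ≠ x} Q t x y · (1 − exp((V t y − V t x)/α)). Then the function h defined by h t x = exp(V t x / α) satisfies the Kolmogorov backward equation for Q on I, i.e., for every t ∈ I and x ∈ X the function s ↦ h s x is differentiable at t with derivative ∑_{y ≠ x} Q t x y · (h t x − h t y). (Key step in the proof of the Feynman–Kac formula in CTMC, Theorem 3.) -/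
open Real Finset

theorem Real.exp_mul_one_sub_exp_sub (a b : ℝ) : exp a * (1 - exp (b - a)) = exp a - exp b := by
  rw [mul_one_sub, ← exp_add, add_sub_cancel]

theorem Real.exp_div_mul_sum_one_sub_exp {ι : Type*} (s : Finset ι) (q w : ι → ℝ) (v : ℝ)
    {α : ℝ} (hα : α ≠ 0) :
    exp (v / α) * ((α * ∑ y ∈ s, q y * (1 - exp ((w y - v) / α))) / α) =
      ∑ y ∈ s, q y * (exp (v / α) - exp (w y / α)) := by
  rw [mul_div_cancel_left₀ _ hα, mul_sum]
  refine sum_congr rfl fun y _ => ?_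
  rw [mul_left_comm, sub_div, exp_mul_one_sub_exp_sub]

theorem drakes_feynman_kac_exp_transform_general
    {X : Type*} [Fintype X] [DecidableEq X]
    (Q : ℝ → X → X → ℝ) (I : Set ℝ) (α : ℝ) (hα : 0 < α)
    (V : ℝ → X → ℝ)
    (hV : ∀ t ∈ I, ∀ x : X, HasDerivAt (fun s => V s x)
      (α * ∑ y ∈ Finset.univ.filter (fun y => y ≠ x),
        Q t x y * (1 - Real.exp ((V t y - V t x) / α))) t) :
    ∀ t ∈ I, ∀ x : X, HasDerivAt (fun s => Real.exp (V s x / α))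
      (∑ y ∈ Finset.univ.filter (fun y => y ≠ x),
        Q t x y * (Real.exp (V t x / α) - Real.exp (V t y / α))) t := by
  intro t ht x
  rw [← exp_div_mul_sum_one_sub_exp _ _ (fun y => V t y) _ hα.ne']
  exact ((hV t ht x).div_const α).exp

/-- Key step in the proof of the Feynman–Kac formula in CTMC: if `V` solves the
value-function ODE, then `h t x = exp (V t x / α)` satisfies the Kolmogorov
backward equation for `Q` on `I`. -/
theorem drakes_feynman_kac_exp_transform
    {X : Type*} [Fintype X] [Nonempty X] [DecidableEq X]
    (Q : ℝ → X → X → ℝ) (I : Set ℝ) (α : ℝ) (hα : 0 < α)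
    (V : ℝ → X → ℝ)
    (hV : ∀ t ∈ I, ∀ x : X, HasDerivAt (fun s => V s x)
      (α * ∑ y ∈ Finset.univ.filter (fun y => y ≠ x),
        Q t x y * (1 - Real.exp ((V t y - V t x) / α))) t) :
    ∀ t ∈ I, ∀ x : X, HasDerivAt (fun s => Real.exp (V s x / α))
      (∑ y ∈ Finset.univ.filter (fun y => y ≠ x),
        Q t x y * (Real.exp (V t x / α) - Real.exp (V t y / α))) t :=
  drakes_feynman_kac_exp_transform_general Q I α hα V hV
end

section
/- Let Y be a finite type, a : Y → ℝ with a y > 0 for all y, and b : Y → ℝ. Then for every q : Y → ℝ with q y > 0 for all y, ∑_{y} (q y − a y − q y · log(q y / a y) + q y · b y) ≤ ∑_{y} a y · (exp(b y) − 1), with equality if and only if q y = a y · exp(b y) for every y. Consequently the supremum of this functional over all positive q : Y → ℝ equals ∑_{y} a y · (exp(b y) − 1) and is attained uniquely at q y = a y · exp(b y). (The maximization in the Hamilton–Jacobi–Bellman equation for CTMC, yielding the optimal generator of Theorem 2.) -/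
open Real Finset

/-!
Completing the entropy: with `c = a·exp b`, each summand equals `a·(exp b − 1) − c·klFun (q / c)`,
where `klFun x = x log x + 1 − x` is the convex Kullback–Leibler integrand. So the objective falls
short of the bound by the unnormalized KL divergence `∑ c·klFun (q / c)` of `q` from `a·exp b`,
which is nonnegative and vanishes exactly at `q = a·exp b`.
-/

open InformationTheory

lemma mul_klFun_div_nonneg {c q : ℝ} (hc : 0 < c) (hq : 0 ≤ q) : 0 ≤ c * klFun (q / c) :=
  mul_nonneg hc.le (klFun_nonneg (div_nonneg hq hc.le))

lemma mul_klFun_div_eq_zero_iff {c q : ℝ} (hc : 0 < c) (hq : 0 ≤ q) :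
    c * klFun (q / c) = 0 ↔ q = c := by
  rw [mul_eq_zero, klFun_eq_zero_iff (div_nonneg hq hc.le), div_eq_one_iff_eq hc.ne']
  simp [hc.ne']

lemma sub_sub_mul_log_div_add_mul_eq {a : ℝ} (ha : a ≠ 0) (q b : ℝ) :
    q - a - q * log (q / a) + q * b =
      a * (exp b - 1) - a * exp b * klFun (q / (a * exp b)) := by
  rcases eq_or_ne q 0 with rfl | hq
  · simp [klFun_apply]; ring
  have hlog : log (q / (a * exp b)) = log (q / a) - b := by
    rw [← div_div, log_div (div_ne_zero hq ha) (exp_pos b).ne', log_exp]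
  rw [klFun_apply, hlog]
  field_simp
  ring

/-- The maximization in the Hamilton–Jacobi–Bellman equation for CTMC, yielding the
optimal generator of Theorem 2: over positive `q : Y → ℝ`, the KL-regularized
objective `∑ y, (q y − a y − q y·log(q y / a y) + q y·b y)` is bounded by
`∑ y, a y·(exp (b y) − 1)`, with equality iff `q y = a y·exp (b y)` for all `y`;
consequently the supremum is attained uniquely at this `q` and equals the bound. -/
theorem drakes_hjb_maximization {Y : Type*} [Fintype Y]
    (a b : Y → ℝ) (ha : ∀ y, 0 < a y) :
    (∀ q : Y → ℝ, (∀ y, 0 < q y) →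
      ∑ y, (q y - a y - q y * Real.log (q y / a y) + q y * b y) ≤
        ∑ y, a y * (Real.exp (b y) - 1)) ∧
    (∀ q : Y → ℝ, (∀ y, 0 < q y) →
      (∑ y, (q y - a y - q y * Real.log (q y / a y) + q y * b y) =
          ∑ y, a y * (Real.exp (b y) - 1) ↔
        ∀ y, q y = a y * Real.exp (b y))) ∧
    IsGreatest {s : ℝ | ∃ q : Y → ℝ, (∀ y, 0 < q y) ∧
        s = ∑ y, (q y - a y - q y * Real.log (q y / a y) + q y * b y)}
      (∑ y, a y * (Real.exp (b y) - 1)) := by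
  have hc : ∀ y, 0 < a y * exp (b y) := fun y => mul_pos (ha y) (exp_pos _)
  have hgap : ∀ q : Y → ℝ, ∑ y, (q y - a y - q y * log (q y / a y) + q y * b y) =
      ∑ y, a y * (exp (b y) - 1) - ∑ y, a y * exp (b y) * klFun (q y / (a y * exp (b y))) :=
    fun q => by
      rw [← sum_sub_distrib]
      exact sum_congr rfl fun y _ => sub_sub_mul_log_div_add_mul_eq (ha y).ne' (q y) (b y)
  have hgap_nonneg : ∀ q : Y → ℝ, (∀ y, 0 < q y) →
      ∀ y ∈ univ, 0 ≤ a y * exp (b y) * klFun (q y / (a y * exp (b y))) :=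
    fun q hq y _ => mul_klFun_div_nonneg (hc y) (hq y).le
  have hle : ∀ q : Y → ℝ, (∀ y, 0 < q y) →
      ∑ y, (q y - a y - q y * log (q y / a y) + q y * b y) ≤ ∑ y, a y * (exp (b y) - 1) :=
    fun q hq => by
      rw [hgap]
      exact sub_le_self _ (sum_nonneg (hgap_nonneg q hq))
  have heq : ∀ q : Y → ℝ, (∀ y, 0 < q y) →
      (∑ y, (q y - a y - q y * log (q y / a y) + q y * b y) = ∑ y, a y * (exp (b y) - 1) ↔
        ∀ y, q y = a y * exp (b y)) :=
    fun q hq => by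
      rw [hgap, sub_eq_self, sum_eq_zero_iff_of_nonneg (hgap_nonneg q hq)]
      simp only [mem_univ, true_imp_iff, mul_klFun_div_eq_zero_iff (hc _) (hq _).le]
  refine ⟨hle, heq, ⟨fun y => a y * exp (b y), hc, ((heq _ hc).mpr fun _ => rfl).symm⟩, ?_⟩
  rintro s ⟨q, hq, rfl⟩
  exact hle q hq
end

section
/- Let X be a finite nonempty type, Q : ℝ → X → X → ℝ a time-dependent rate family, and I ⊆ ℝ. Suppose h : ℝ → X → ℝ satisfies h t x > 0 for all t ∈ I and x ∈ X and satisfies the Kolmogorov backward equation for Q on I, and suppose p : ℝ → X → ℝ satisfies the Kolmogorov forward equation for Q on I. Let C ≠ 0 be a real constant, define Q* : ℝ → X → X → ℝ by Q* t x y = Q t x y · h t y / h t x for x ≠ y, and define H : ℝ → X → ℝ by H t x = h t x · p t x / C. Then H satisfies the Kolmogorov forward equation for Q* on I, i.e., for every t ∈ I and x ∈ X the function s ↦ H s x is differentiable at t with derivative (∑_{y ≠ x} Q* t y x · H t y) − (∑_{y ≠ x} Q* t x y · H t x). (Core computation in the proof of Theorem 4: the marginal distribution induced by the optimal generator is the Doob-type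 transform exp(V_t(·)/α)·p^{pre}_t(·)/C.) -/
open Real Finset

/-!
The product rule gives `∂ₜ(h p) = (Lh) p + h (L*p)`, where `L` and `L*` are the backward and
forward generators of `Q`. Multiplying out, the diagonal terms `Q x y · h x · p x` cancel and what
remains is exactly the forward generator of the Doob transform `Q x y · h y / h x` applied to
`h p`. The forward equation is linear, so dividing by the constant `C` preserves it.
-/

section KolmogorovGenerators

variable {X : Type*} [Fintype X] [DecidableEq X]

def kolmogorovForward (q : X → X → ℝ) (p : X → ℝ) (x : X) : ℝ :=
  (∑ y ∈ Finset.univ.filter (fun y => y ≠ x), q y x * p y) -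
    ∑ y ∈ Finset.univ.filter (fun y => y ≠ x), q x y * p x

def kolmogorovBackward (q : X → X → ℝ) (h : X → ℝ) (x : X) : ℝ :=
  ∑ y ∈ Finset.univ.filter (fun y => y ≠ x), q x y * (h x - h y)

noncomputable def doobTransform (q : X → X → ℝ) (h : X → ℝ) (x y : X) : ℝ :=
  q x y * h y / h x

theorem kolmogorovForward_congr_offDiag {q q' : X → X → ℝ} (hq : ∀ x y, x ≠ y → q x y = q' x y)
    (p : X → ℝ) (x : X) : kolmogorovForward q p x = kolmogorovForward q' p x := by
  unfold kolmogorovForward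
  congr 1 <;> refine Finset.sum_congr rfl fun y hy => ?_
  · rw [hq y x (Finset.mem_filter.mp hy).2]
  · rw [hq x y (Finset.mem_filter.mp hy).2.symm]

theorem kolmogorovForward_mul_const (q : X → X → ℝ) (p : X → ℝ) (c : ℝ) (x : X) :
    kolmogorovForward q (fun y => p y * c) x = kolmogorovForward q p x * c := by
  simp only [kolmogorovForward, sub_mul, Finset.sum_mul, mul_assoc]

theorem kolmogorovForward_doobTransform (q : X → X → ℝ) {h : X → ℝ} (hh : ∀ y, h y ≠ 0)
    (p : X → ℝ) (x : X) :
    kolmogorovForward (doobTransform q h) (fun y => h y * p y) x =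
      kolmogorovBackward q h x * p x + h x * kolmogorovForward q p x := by
  have hin : ∀ y, doobTransform q h y x * (h y * p y) = q y x * p y * h x := fun y => by
    simp only [doobTransform]; field_simp [hh y]
  have hout : ∀ y, doobTransform q h x y * (h x * p x) = q x y * h y * p x := fun y => by
    simp only [doobTransform]; field_simp [hh x]
  simp only [kolmogorovForward, kolmogorovBackward, hin, hout, mul_sub, sub_mul,
    Finset.sum_sub_distrib, ← Finset.sum_mul]
  ring

end KolmogorovGenerators

theorem drakes_doob_transform_forward_equation_general
    {X : Type*} [Fintype X] [DecidableEq X]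
    (Q : ℝ → X → X → ℝ) (I : Set ℝ)
    (h p : ℝ → X → ℝ) (C : ℝ)
    (hpos : ∀ t ∈ I, ∀ x : X, 0 < h t x)
    (hback : ∀ t ∈ I, ∀ x : X, HasDerivAt (fun s => h s x)
      (∑ y ∈ Finset.univ.filter (fun y => y ≠ x), Q t x y * (h t x - h t y)) t)
    (hfwd : ∀ t ∈ I, ∀ x : X, HasDerivAt (fun s => p s x)
      ((∑ y ∈ Finset.univ.filter (fun y => y ≠ x), Q t y x * p t y) -
        ∑ y ∈ Finset.univ.filter (fun y => y ≠ x), Q t x y * p t x) t)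
    (Qstar : ℝ → X → X → ℝ)
    (hQstar : ∀ t : ℝ, ∀ x y : X, x ≠ y → Qstar t x y = Q t x y * h t y / h t x)
    (H : ℝ → X → ℝ)
    (hH : ∀ t : ℝ, ∀ x : X, H t x = h t x * p t x / C) :
    ∀ t ∈ I, ∀ x : X, HasDerivAt (fun s => H s x)
      ((∑ y ∈ Finset.univ.filter (fun y => y ≠ x), Qstar t y x * H t y) -
        ∑ y ∈ Finset.univ.filter (fun y => y ≠ x), Qstar t x y * H t x) t := by
  intro t ht x
  have hH' : H = fun s y => h s y * p s y * C⁻¹ := by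
    funext s y; rw [hH, div_eq_mul_inv]
  have hrhs : kolmogorovForward (Qstar t) (H t) x =
      (kolmogorovBackward (Q t) (h t) x * p t x + h t x * kolmogorovForward (Q t) (p t) x) * C⁻¹ := by
    rw [kolmogorovForward_congr_offDiag (q' := doobTransform (Q t) (h t)) (hQstar t), hH',
      kolmogorovForward_mul_const,
      kolmogorovForward_doobTransform (Q t) fun y => (hpos t ht y).ne']
  have hprod := ((hback t ht x).mul (hfwd t ht x)).mul_const C⁻¹
  show HasDerivAt (fun s => H s x) (kolmogorovForward (Qstar t) (H t) x) t
  rw [hrhs, hH']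
  exact hprod

/-- Core computation in the proof of Theorem 4 (Doob-type transform): if `h` is positive
and satisfies the Kolmogorov backward equation for `Q` on `I`, and `p` satisfies the
Kolmogorov forward equation for `Q` on `I`, then `H t x = h t x · p t x / C` satisfies
the Kolmogorov forward equation for the transformed rate family
`Q* t x y = Q t x y · h t y / h t x` (for `x ≠ y`) on `I`. -/
theorem drakes_doob_transform_forward_equation
    {X : Type*} [Fintype X] [Nonempty X] [DecidableEq X]
    (Q : ℝ → X → X → ℝ) (I : Set ℝ)
    (h p : ℝ → X → ℝ) (C : ℝ) (hC : C ≠ 0)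
    (hpos : ∀ t ∈ I, ∀ x : X, 0 < h t x)
    (hback : ∀ t ∈ I, ∀ x : X, HasDerivAt (fun s => h s x)
      (∑ y ∈ Finset.univ.filter (fun y => y ≠ x), Q t x y * (h t x - h t y)) t)
    (hfwd : ∀ t ∈ I, ∀ x : X, HasDerivAt (fun s => p s x)
      ((∑ y ∈ Finset.univ.filter (fun y => y ≠ x), Q t y x * p t y) -
        ∑ y ∈ Finset.univ.filter (fun y => y ≠ x), Q t x y * p t x) t)
    (Qstar : ℝ → X → X → ℝ)
    (hQstar : ∀ t : ℝ, ∀ x y : X, x ≠ y → Qstar t x y = Q t x y * h t y / h t x)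
    (H : ℝ → X → ℝ)
    (hH : ∀ t : ℝ, ∀ x : X, H t x = h t x * p t x / C) :
    ∀ t ∈ I, ∀ x : X, HasDerivAt (fun s => H s x)
      ((∑ y ∈ Finset.univ.filter (fun y => y ≠ x), Qstar t y x * H t y) -
        ∑ y ∈ Finset.univ.filter (fun y => y ≠ x), Qstar t x y * H t x) t :=
  drakes_doob_transform_forward_equation_general Q I h p C hpos hback hfwd Qstar hQstar H hH
end

section
/- Let X be a finite nonempty type, Q : ℝ → X → X → ℝ a time-dependent rate family, and I ⊆ ℝ an interval. If h : ℝ → X → ℝ satisfies the Kolmogorov backward equation for Q on I and p : ℝ → X → ℝ satisfies the Kolmogorov forward equation for Q on I, then for every t ∈ I the function s ↦ ∑_{x ∈ X} h s x · p s x is differentiable at t with derivative 0; consequently the quantity ∑_{x ∈ X} h t x · p t x is constant on I. (Conservation of the normalizing constant C = ∑_x exp(V_t(x)/α)·p^{pre}_t(x) implicit in the proof of Theorem 4.) -/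
/-!
Write `L h x = ∑_{y ≠ x} Q x y (h x - h y)` for the right-hand side of the backward equation
and `L* p` for that of the forward one. Swapping the roles of `x` and `y` in the off-diagonal
double sum shows `∑ x, h x (L* p) x = -∑ x, (L h) x p x`, so by the product rule the derivative
of `∑ x, h x p x` vanishes on `I`; the mean value inequality on the convex set `I` then makes it
constant there.
-/

open Finset

section Generator

variable {X : Type*} [Fintype X] [DecidableEq X]

def backwardGenerator (Q : X → X → ℝ) (h : X → ℝ) (x : X) : ℝ :=
  ∑ y ∈ univ.filter (· ≠ x), Q x y * (h x - h y)

def forwardGenerator (Q : X → X → ℝ) (p : X → ℝ) (x : X) : ℝ :=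
  (∑ y ∈ univ.filter (· ≠ x), Q y x * p y) - ∑ y ∈ univ.filter (· ≠ x), Q x y * p x

theorem sum_sum_filter_ne_comm {M : Type*} [AddCommMonoid M] (f : X → X → M) :
    ∑ x, ∑ y ∈ univ.filter (· ≠ x), f x y = ∑ x, ∑ y ∈ univ.filter (· ≠ x), f y x := by
  simp only [sum_filter]
  rw [sum_comm]
  simp only [ne_comm]

theorem sum_mul_forwardGenerator (Q : X → X → ℝ) (h p : X → ℝ) :
    ∑ x, h x * forwardGenerator Q p x = -∑ x, backwardGenerator Q h x * p x := by
  have inflow : ∑ x, h x * ∑ y ∈ univ.filter (· ≠ x), Q y x * p y =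
      ∑ x, ∑ y ∈ univ.filter (· ≠ x), Q x y * p x * h y := by
    simp only [mul_sum]
    rw [sum_sum_filter_ne_comm]
    simp only [mul_comm, mul_left_comm]
  simp only [forwardGenerator, backwardGenerator, mul_sub, sum_sub_distrib]
  rw [inflow, ← sum_sub_distrib, ← sum_neg_distrib]
  refine sum_congr rfl fun x _ => ?_
  rw [mul_sum, ← sum_sub_distrib, ← sum_sub_distrib, sum_mul, ← sum_neg_distrib]
  refine sum_congr rfl fun y _ => ?_
  ring

theorem sum_backwardGenerator_mul_add_mul_forwardGenerator (Q : X → X → ℝ) (h p : X → ℝ) :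
    ∑ x, (backwardGenerator Q h x * p x + h x * forwardGenerator Q p x) = 0 := by
  rw [sum_add_distrib, sum_mul_forwardGenerator, add_neg_cancel]

end Generator

theorem Convex.eq_of_hasDerivAt_zero {E : Type*} [NormedAddCommGroup E] [NormedSpace ℝ E]
    {f : ℝ → E} {s : Set ℝ} (hs : Convex ℝ s) (hf : ∀ t ∈ s, HasDerivAt f 0 t)
    {x y : ℝ} (hx : x ∈ s) (hy : y ∈ s) : f x = f y := by
  have bound := hs.norm_image_sub_le_of_norm_hasDerivWithin_le
    (fun t ht => (hf t ht).hasDerivWithinAt) (fun _ _ => norm_zero.le) hy hx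
  rwa [zero_mul, norm_le_zero_iff, sub_eq_zero] at bound

theorem drakes_normalizing_constant_conserved_general
    {X : Type*} [Fintype X] [DecidableEq X]
    (Q : ℝ → X → X → ℝ) (I : Set ℝ) (hI : Convex ℝ I)
    (h p : ℝ → X → ℝ)
    (hback : ∀ t ∈ I, ∀ x : X, HasDerivAt (fun s => h s x)
      (∑ y ∈ Finset.univ.filter (fun y => y ≠ x), Q t x y * (h t x - h t y)) t)
    (hfwd : ∀ t ∈ I, ∀ x : X, HasDerivAt (fun s => p s x)
      ((∑ y ∈ Finset.univ.filter (fun y => y ≠ x), Q t y x * p t y) -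
        ∑ y ∈ Finset.univ.filter (fun y => y ≠ x), Q t x y * p t x) t) :
    (∀ t ∈ I, HasDerivAt (fun s => ∑ x : X, h s x * p s x) 0 t) ∧
    (∀ t ∈ I, ∀ t' ∈ I, ∑ x : X, h t x * p t x = ∑ x : X, h t' x * p t' x) := by
  have hderiv : ∀ t ∈ I, HasDerivAt (fun s => ∑ x : X, h s x * p s x) 0 t := fun t ht => by
    have hsum := HasDerivAt.fun_sum fun x (_ : x ∈ univ) => (hback t ht x).mul (hfwd t ht x)
    rwa [← sum_backwardGenerator_mul_add_mul_forwardGenerator (Q t) (h t) (p t)]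
  exact ⟨hderiv, fun t ht t' ht' => hI.eq_of_hasDerivAt_zero hderiv ht ht'⟩

/-- Conservation of the normalizing constant `C = ∑ x, exp(V_t(x)/α) · p^{pre}_t(x)`
implicit in the proof of Theorem 4: if `h` satisfies the Kolmogorov backward equation
and `p` the Kolmogorov forward equation for `Q` on an interval `I`, then
`∑ x, h t x · p t x` has zero derivative at every `t ∈ I`, hence is constant on `I`. -/
theorem drakes_normalizing_constant_conserved
    {X : Type*} [Fintype X] [Nonempty X] [DecidableEq X]
    (Q : ℝ → X → X → ℝ) (I : Set ℝ) (hI : Convex ℝ I)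
    (h p : ℝ → X → ℝ)
    (hback : ∀ t ∈ I, ∀ x : X, HasDerivAt (fun s => h s x)
      (∑ y ∈ Finset.univ.filter (fun y => y ≠ x), Q t x y * (h t x - h t y)) t)
    (hfwd : ∀ t ∈ I, ∀ x : X, HasDerivAt (fun s => p s x)
      ((∑ y ∈ Finset.univ.filter (fun y => y ≠ x), Q t y x * p t y) -
        ∑ y ∈ Finset.univ.filter (fun y => y ≠ x), Q t x y * p t x) t) :
    (∀ t ∈ I, HasDerivAt (fun s => ∑ x : X, h s x * p s x) 0 t) ∧
    (∀ t ∈ I, ∀ t' ∈ I, ∑ x : X, h t x * p t x = ∑ x : X, h t' x * p t' x) :=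
  drakes_normalizing_constant_conserved_general Q I hI h p hback hfwd
end

section
/- Let X be a finite nonempty type, T > 0, and Q : ℝ → X → X → ℝ a time-dependent rate family whose entries t ↦ Q t x y are continuous on [0, T]. Suppose h : ℝ → X → ℝ is positive on [0, T] and satisfies the Kolmogorov backward equation for Q on [0, T], p : ℝ → X → ℝ satisfies the Kolmogorov forward equation for Q on [0, T], and C ≠ 0 is a real constant. Define Q* t x y = Q t x y · h t y / h t x for x ≠ y and H t x = h t x · p t x / C. If p* : ℝ → X → ℝ satisfies the Kolmogorov forward equation for Q* on [0, T] with initial condition p* 0 x = H 0 x for all x ∈ X, then p* t x = H t x for all t ∈ [0, T] and x ∈ X. In particular, if α > 0, r : X → ℝ, and h T x = exp(r x / α) for all x, then p* T x = exp(r x / α) · p T x / C, i.e., the distribution generated at time T by the transformed rate family is proportional to exp(r(·)/α) · p_T(·). (Theorems 1 and 4: the fine-tuned distribution is proportional to exp(r(·)/α)·p^{pre}(·).) -/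
open Finset Set

/-!
Conjugating the rates by a positive solution `h` of the backward equation (Doob's `h`-transform)
turns the forward equation for `Q` into the forward equation for `Q*` after multiplication by `h`:
by the product rule, `(h p)' = (backward drift of h) · p + h · (forward drift of p)`, and this is
exactly the forward drift of `h p` under `Q*`. So `H = h p / C` and `p*` solve the same linear ODE
with the same initial value. Continuity of `Q` and `h` on the compact interval `[0, T]` bounds the
rates of `Q*`, which makes that ODE Lipschitz, and uniqueness of solutions gives `p* = H`.
-/

open scoped NNReal

section Drift

variable {X : Type*} [Fintype X] [DecidableEq X]

/- Right-hand sides of the Kolmogorov forward and backward equations for the rate matrix `R`;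
only its off-diagonal entries enter. -/
def forwardDrift (R : X → X → ℝ) (f : X → ℝ) (x : X) : ℝ :=
  (∑ y ∈ univ.filter (fun y => y ≠ x), R y x * f y) -
    ∑ y ∈ univ.filter (fun y => y ≠ x), R x y * f x

def backwardDrift (R : X → X → ℝ) (h : X → ℝ) (x : X) : ℝ :=
  ∑ y ∈ univ.filter (fun y => y ≠ x), R x y * (h x - h y)

theorem forwardDrift_sub (R : X → X → ℝ) (f g : X → ℝ) :
    forwardDrift R (f - g) = forwardDrift R f - forwardDrift R g := by
  ext x
  simp only [forwardDrift, Pi.sub_apply, mul_sub, Finset.sum_sub_distrib]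
  ring

theorem forwardDrift_div_const (R : X → X → ℝ) (f : X → ℝ) (C : ℝ) (x : X) :
    forwardDrift R (fun y => f y / C) x = forwardDrift R f x / C := by
  simp only [forwardDrift, sub_div, Finset.sum_div, mul_div_assoc]

theorem forwardDrift_mul_of_eq_hTransform {R R' : X → X → ℝ} {h : X → ℝ} (hh : ∀ x, h x ≠ 0)
    (hR' : ∀ x y, x ≠ y → R' x y = R x y * h y / h x) (p : X → ℝ) (x : X) :
    forwardDrift R' (fun y => h y * p y) x =
      backwardDrift R h x * p x + h x * forwardDrift R p x := by
  have hterm : ∀ y ∈ univ.filter (fun y => y ≠ x),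
      R' y x * (h y * p y) - R' x y * (h x * p x) =
        R x y * (h x - h y) * p x + (h x * (R y x * p y) - h x * (R x y * p x)) := by
    intro y hy
    have hyx : y ≠ x := (Finset.mem_filter.mp hy).2
    rw [hR' y x hyx, hR' x y hyx.symm]
    field_simp [hh x, hh y]
    ring
  simp only [forwardDrift, backwardDrift, ← Finset.sum_sub_distrib, Finset.sum_congr rfl hterm,
    Finset.sum_add_distrib, Finset.sum_mul, Finset.mul_sum, mul_sub]

theorem norm_forwardDrift_le {R : X → X → ℝ} {M : ℝ≥0} (hR : ∀ x y, x ≠ y → |R x y| ≤ M)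
    (f : X → ℝ) : ‖forwardDrift R f‖ ≤ 2 * Fintype.card X * M * ‖f‖ := by
  refine (pi_norm_le_iff_of_nonneg (by positivity)).2 fun x => ?_
  have hterm : ∀ u v, u ≠ v → ∀ z, |R u v * f z| ≤ M * ‖f‖ := fun u v huv z => by
    rw [abs_mul]
    exact mul_le_mul (hR u v huv) (norm_le_pi_norm f z) (abs_nonneg _) M.coe_nonneg
  have hsum : ∀ g : X → ℝ, (∀ y ≠ x, |g y| ≤ M * ‖f‖) →
      |∑ y ∈ univ.filter (fun y => y ≠ x), g y| ≤ Fintype.card X * (M * ‖f‖) := by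
    intro g hg
    calc |∑ y ∈ univ.filter (fun y => y ≠ x), g y|
        ≤ ∑ y ∈ univ.filter (fun y => y ≠ x), |g y| := Finset.abs_sum_le_sum_abs _ _
      _ ≤ (univ.filter (fun y => y ≠ x)).card * (M * ‖f‖) := by
          rw [← nsmul_eq_mul]
          exact Finset.sum_le_card_nsmul _ _ _ fun y hy => hg y (Finset.mem_filter.mp hy).2
      _ ≤ Fintype.card X * (M * ‖f‖) := by
          gcongr
          exact_mod_cast Finset.card_filter_le _ _
  calc ‖forwardDrift R f x‖
      ≤ |∑ y ∈ univ.filter (fun y => y ≠ x), R y x * f y| +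
          |∑ y ∈ univ.filter (fun y => y ≠ x), R x y * f x| := abs_sub _ _
    _ ≤ Fintype.card X * (M * ‖f‖) + Fintype.card X * (M * ‖f‖) :=
        add_le_add (hsum _ fun y hy => hterm y x hy _) (hsum _ fun y hy => hterm x y hy.symm _)
    _ = 2 * Fintype.card X * M * ‖f‖ := by ring

theorem lipschitzWith_forwardDrift {R : X → X → ℝ} {M : ℝ≥0} (hR : ∀ x y, x ≠ y → |R x y| ≤ M) :
    LipschitzWith (2 * Fintype.card X * M) (forwardDrift R) :=
  LipschitzWith.of_dist_le_mul fun f g => by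
    simpa [dist_eq_norm, ← forwardDrift_sub] using norm_forwardDrift_le hR (f - g)

theorem eqOn_Icc_of_hasDerivAt_forwardDrift {R : ℝ → X → X → ℝ} {f g : ℝ → X → ℝ} {a b : ℝ}
    {M : ℝ≥0} (hR : ∀ t ∈ Icc a b, ∀ x y, x ≠ y → |R t x y| ≤ M)
    (hf : ∀ t ∈ Icc a b, HasDerivAt f (forwardDrift (R t) (f t)) t)
    (hg : ∀ t ∈ Icc a b, HasDerivAt g (forwardDrift (R t) (g t)) t) (ha : f a = g a) :
    EqOn f g (Icc a b) :=
  ODE_solution_unique_of_mem_Icc_right (s := fun _ => univ)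
    (fun t ht => (lipschitzWith_forwardDrift (hR t (Ico_subset_Icc_self ht))).lipschitzOnWith)
    (fun t ht => (hf t ht).continuousAt.continuousWithinAt)
    (fun t ht => (hf t (Ico_subset_Icc_self ht)).hasDerivWithinAt) (fun _ _ => mem_univ _)
    (fun t ht => (hg t ht).continuousAt.continuousWithinAt)
    (fun t ht => (hg t (Ico_subset_Icc_self ht)).hasDerivWithinAt) (fun _ _ => mem_univ _) ha

theorem hasDerivAt_hTransform_forwardDrift {Q Q' : ℝ → X → X → ℝ} {h p : ℝ → X → ℝ} {t : ℝ}
    (hh : ∀ x, h t x ≠ 0) (hQ' : ∀ x y, x ≠ y → Q' t x y = Q t x y * h t y / h t x)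
    (hback : ∀ x, HasDerivAt (fun s => h s x) (backwardDrift (Q t) (h t) x) t)
    (hfwd : ∀ x, HasDerivAt (fun s => p s x) (forwardDrift (Q t) (p t) x) t) (C : ℝ) :
    HasDerivAt (fun s x => h s x * p s x / C)
      (forwardDrift (Q' t) (fun x => h t x * p t x / C)) t := by
  refine hasDerivAt_pi.2 fun x => ((hback x).mul (hfwd x)).div_const C |>.congr_deriv ?_
  rw [forwardDrift_div_const, forwardDrift_mul_of_eq_hTransform hh hQ']

end Drift

theorem IsCompact.exists_nnreal_bound_of_continuousOn_pi {ι : Type*} [Fintype ι] {s : Set ℝ}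
    (hs : IsCompact s) {F : ℝ → ι → ℝ} (hF : ∀ i, ContinuousOn (fun t => F t i) s) :
    ∃ M : ℝ≥0, ∀ t ∈ s, ∀ i, |F t i| ≤ M := by
  obtain ⟨M, hM⟩ := hs.exists_bound_of_continuousOn (continuousOn_pi.2 hF)
  exact ⟨M.toNNReal, fun t ht i =>
    ((norm_le_pi_norm (F t) i).trans (hM t ht)).trans (Real.le_coe_toNNReal M)⟩

theorem drakes_finetuned_distribution_general
    {X : Type*} [Fintype X] [DecidableEq X]
    (T : ℝ) (hT : 0 < T) (Q : ℝ → X → X → ℝ)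
    (hQcont : ∀ x y : X, ContinuousOn (fun t => Q t x y) (Set.Icc 0 T))
    (h p : ℝ → X → ℝ)
    (hpos : ∀ t ∈ Set.Icc (0 : ℝ) T, ∀ x : X, 0 < h t x)
    (hback : ∀ t ∈ Set.Icc (0 : ℝ) T, ∀ x : X, HasDerivAt (fun s => h s x)
      (∑ y ∈ Finset.univ.filter (fun y => y ≠ x), Q t x y * (h t x - h t y)) t)
    (hfwd : ∀ t ∈ Set.Icc (0 : ℝ) T, ∀ x : X, HasDerivAt (fun s => p s x)
      ((∑ y ∈ Finset.univ.filter (fun y => y ≠ x), Q t y x * p t y) -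
        ∑ y ∈ Finset.univ.filter (fun y => y ≠ x), Q t x y * p t x) t)
    (C : ℝ)
    (Qstar : ℝ → X → X → ℝ)
    (hQstar : ∀ t : ℝ, ∀ x y : X, x ≠ y → Qstar t x y = Q t x y * h t y / h t x)
    (H : ℝ → X → ℝ)
    (hH : ∀ t : ℝ, ∀ x : X, H t x = h t x * p t x / C)
    (pstar : ℝ → X → ℝ)
    (hpstarfwd : ∀ t ∈ Set.Icc (0 : ℝ) T, ∀ x : X, HasDerivAt (fun s => pstar s x)
      ((∑ y ∈ Finset.univ.filter (fun y => y ≠ x), Qstar t y x * pstar t y) -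
        ∑ y ∈ Finset.univ.filter (fun y => y ≠ x), Qstar t x y * pstar t x) t)
    (hpstar0 : ∀ x : X, pstar 0 x = H 0 x) :
    (∀ t ∈ Set.Icc (0 : ℝ) T, ∀ x : X, pstar t x = H t x) ∧
    (∀ α : ℝ, 0 < α → ∀ r : X → ℝ, (∀ x : X, h T x = Real.exp (r x / α)) →
      ∀ x : X, pstar T x = Real.exp (r x / α) * p T x / C) := by
  have hne : ∀ t ∈ Icc 0 T, ∀ x, h t x ≠ 0 := fun t ht x => (hpos t ht x).ne'
  obtain ⟨M, hM⟩ := isCompact_Icc.exists_nnreal_bound_of_continuousOn_pi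
    (F := fun t (xy : X × X) => Q t xy.1 xy.2 * h t xy.2 / h t xy.1) fun xy =>
      ((hQcont xy.1 xy.2).mul fun t ht => (hback t ht xy.2).continuousAt.continuousWithinAt).div
        (fun t ht => (hback t ht xy.1).continuousAt.continuousWithinAt) (hne · · xy.1)
  have hHfwd : ∀ t ∈ Icc 0 T, HasDerivAt H (forwardDrift (Qstar t) (H t)) t := by
    have hHfun : H = fun s x => h s x * p s x / C := funext₂ hH
    subst hHfun
    exact fun t ht => hasDerivAt_hTransform_forwardDrift (hne t ht) (hQstar t) (hback t ht)
      (hfwd t ht) C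
  have hpstar_eq : EqOn pstar H (Icc 0 T) :=
    eqOn_Icc_of_hasDerivAt_forwardDrift
      (fun t ht x y hxy => hQstar t x y hxy ▸ hM t ht (x, y))
      (fun t ht => hasDerivAt_pi.2 (hpstarfwd t ht)) hHfwd (funext hpstar0)
  refine ⟨fun t ht x => congrFun (hpstar_eq ht) x, fun α _ r hr x => ?_⟩
  rw [congrFun (hpstar_eq ⟨hT.le, le_rfl⟩) x, hH, hr]

/-- Theorems 1 and 4: the fine-tuned distribution is proportional to
`exp(r(·)/α) · p^{pre}(·)`. With continuous rate entries, a positive backward solution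
`h`, a forward solution `p`, and the transformed rates `Q* t x y = Q t x y · h t y / h t x`,
any solution `p*` of the forward equation for `Q*` with initial condition
`p* 0 = h 0 · p 0 / C` coincides with `H t x = h t x · p t x / C` on `[0, T]`;
in particular if `h T x = exp (r x / α)` then `p* T x = exp (r x / α) · p T x / C`. -/
theorem drakes_finetuned_distribution
    {X : Type*} [Fintype X] [Nonempty X] [DecidableEq X]
    (T : ℝ) (hT : 0 < T) (Q : ℝ → X → X → ℝ)
    (hQcont : ∀ x y : X, ContinuousOn (fun t => Q t x y) (Set.Icc 0 T))
    (h p : ℝ → X → ℝ)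
    (hpos : ∀ t ∈ Set.Icc (0 : ℝ) T, ∀ x : X, 0 < h t x)
    (hback : ∀ t ∈ Set.Icc (0 : ℝ) T, ∀ x : X, HasDerivAt (fun s => h s x)
      (∑ y ∈ Finset.univ.filter (fun y => y ≠ x), Q t x y * (h t x - h t y)) t)
    (hfwd : ∀ t ∈ Set.Icc (0 : ℝ) T, ∀ x : X, HasDerivAt (fun s => p s x)
      ((∑ y ∈ Finset.univ.filter (fun y => y ≠ x), Q t y x * p t y) -
        ∑ y ∈ Finset.univ.filter (fun y => y ≠ x), Q t x y * p t x) t)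
    (C : ℝ) (hC : C ≠ 0)
    (Qstar : ℝ → X → X → ℝ)
    (hQstar : ∀ t : ℝ, ∀ x y : X, x ≠ y → Qstar t x y = Q t x y * h t y / h t x)
    (H : ℝ → X → ℝ)
    (hH : ∀ t : ℝ, ∀ x : X, H t x = h t x * p t x / C)
    (pstar : ℝ → X → ℝ)
    (hpstarfwd : ∀ t ∈ Set.Icc (0 : ℝ) T, ∀ x : X, HasDerivAt (fun s => pstar s x)
      ((∑ y ∈ Finset.univ.filter (fun y => y ≠ x), Qstar t y x * pstar t y) -
        ∑ y ∈ Finset.univ.filter (fun y => y ≠ x), Qstar t x y * pstar t x) t)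
    (hpstar0 : ∀ x : X, pstar 0 x = H 0 x) :
    (∀ t ∈ Set.Icc (0 : ℝ) T, ∀ x : X, pstar t x = H t x) ∧
    (∀ α : ℝ, 0 < α → ∀ r : X → ℝ, (∀ x : X, h T x = Real.exp (r x / α)) →
      ∀ x : X, pstar T x = Real.exp (r x / α) * p T x / C) :=
  drakes_finetuned_distribution_general T hT Q hQcont h p hpos hback hfwd C Qstar hQstar H hH pstar
    hpstarfwd hpstar0
end

section
/- Let X be a finite type with a distinguished element M (the Mask symbol), γ > 0, and sθ, spre : X → ℝ with sθ x > 0 and spre x > 0 for all x ≠ M. Let c : X → ℝ be nonnegative, and define Qθ, Qpre : X → X → ℝ by: Qθ M y = Qpre M y = c y for all y; for x ≠ M, Qθ x y = γ·sθ x if y = M and Qθ x y = 0 otherwise, and Qpre x y = γ·spre x if y = M and Qpre x y = 0 otherwise. Then for every weight function w : X → ℝ, ∑_{x ∈ X} w x · ∑_{y ≠ x} (−Qθ x y + Qpre x y + Qθ x y · log(Qθ x y / Qpre x y)) = γ · ∑_{x ≠ M} w x · (−sθ x + spre x + sθ x · log(sθ x / spre x)), where any summand of the form 0·log(0/0) or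 r·log(r/r) is interpreted as 0. (Simplified formula of the KL divergence estimator g(θ) for masked diffusion models, Appendix C.2.) -/
/-!
Each row of a masked generator has at most one off-diagonal entry that differs between the two
models: the row of `M` is shared, so its terms `r - r + r log (r / r)` vanish, and a row `x ≠ M`
is supported on the single jump `x → M`. Every vanishing entry contributes `0 log (0 / 0) = 0`,
and the common factor `γ` cancels inside the logarithm and factors out of the rest.
-/

open Real Finset

noncomputable def klTerm (a b : ℝ) : ℝ := -a + b + a * log (a / b)

@[simp]
lemma klTerm_self (a : ℝ) : klTerm a a = 0 := by
  rcases eq_or_ne a 0 with rfl | ha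
  · simp [klTerm]
  · simp [klTerm, div_self ha]

lemma klTerm_mul_left {γ : ℝ} (hγ : γ ≠ 0) (a b : ℝ) :
    klTerm (γ * a) (γ * b) = γ * klTerm a b := by
  rw [klTerm, klTerm, mul_div_mul_left _ _ hγ]
  ring

lemma sum_klTerm_eq_single {ι : Type*} [DecidableEq ι] {s : Finset ι} {j : ι} (hj : j ∈ s)
    {f g : ι → ℝ} (hf : ∀ i ≠ j, f i = 0) (hg : ∀ i ≠ j, g i = 0) :
    ∑ i ∈ s, klTerm (f i) (g i) = klTerm (f j) (g j) :=
  sum_eq_single_of_mem j hj fun i _ hi => by rw [hf i hi, hg i hi, klTerm_self]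

theorem drakes_masked_kl_simplification_general
    {X : Type*} [Fintype X] [DecidableEq X] (M : X) (γ : ℝ) (hγ : 0 < γ)
    (sθ spre : X → ℝ)
    (c : X → ℝ)
    (Qθ Qpre : X → X → ℝ)
    (hQθM : ∀ y : X, Qθ M y = c y) (hQpreM : ∀ y : X, Qpre M y = c y)
    (hQθ : ∀ x : X, x ≠ M → ∀ y : X, Qθ x y = if y = M then γ * sθ x else 0)
    (hQpre : ∀ x : X, x ≠ M → ∀ y : X, Qpre x y = if y = M then γ * spre x else 0)
    (w : X → ℝ) :
    ∑ x : X, w x * ∑ y ∈ Finset.univ.filter (fun y => y ≠ x),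
        (-Qθ x y + Qpre x y + Qθ x y * Real.log (Qθ x y / Qpre x y)) =
      γ * ∑ x ∈ Finset.univ.filter (fun x => x ≠ M),
        w x * (-sθ x + spre x + sθ x * Real.log (sθ x / spre x)) := by
  have row : ∀ x, w x * ∑ y ∈ univ.filter (· ≠ x), klTerm (Qθ x y) (Qpre x y) =
      if x ≠ M then γ * (w x * klTerm (sθ x) (spre x)) else 0 := by
    intro x
    by_cases hx : x = M
    · subst hx
      simp [hQθM, hQpreM]
    · have hM : M ∈ univ.filter (· ≠ x) := by simp [Ne.symm hx]
      rw [sum_klTerm_eq_single hM (fun y hy => by simp [hQθ x hx, hy])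
        (fun y hy => by simp [hQpre x hx, hy])]
      simp only [hQθ x hx, hQpre x hx, if_true, if_pos hx, klTerm_mul_left hγ.ne']
      ring
  calc _ = ∑ x, w x * ∑ y ∈ univ.filter (· ≠ x), klTerm (Qθ x y) (Qpre x y) := rfl
    _ = γ * ∑ x ∈ univ.filter (· ≠ M), w x * klTerm (sθ x) (spre x) := by
      simp only [row, ← sum_filter, mul_sum]

/-- Simplified formula of the KL divergence estimator `g(θ)` for masked diffusion models
(Appendix C.2): for the reverse-process generators of masked diffusion models, which
only have nonzero off-diagonal rates `γ·sθ x` (resp. `γ·spre x`) from non-Mask states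
`x` into the Mask state `M` (and common rates `c` out of `M`), the weighted KL summand
reduces to `γ · ∑_{x ≠ M} w x · (−sθ x + spre x + sθ x · log (sθ x / spre x))`.
(Summands of the form `0·log(0/0)` or `r·log(r/r)` vanish, automatically since
`Real.log 0 = 0` and `log (r/r) = 0`.) -/
theorem drakes_masked_kl_simplification
    {X : Type*} [Fintype X] [DecidableEq X] (M : X) (γ : ℝ) (hγ : 0 < γ)
    (sθ spre : X → ℝ)
    (hsθ : ∀ x : X, x ≠ M → 0 < sθ x) (hspre : ∀ x : X, x ≠ M → 0 < spre x)
    (c : X → ℝ) (hc : ∀ y, 0 ≤ c y)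
    (Qθ Qpre : X → X → ℝ)
    (hQθM : ∀ y : X, Qθ M y = c y) (hQpreM : ∀ y : X, Qpre M y = c y)
    (hQθ : ∀ x : X, x ≠ M → ∀ y : X, Qθ x y = if y = M then γ * sθ x else 0)
    (hQpre : ∀ x : X, x ≠ M → ∀ y : X, Qpre x y = if y = M then γ * spre x else 0)
    (w : X → ℝ) :
    ∑ x : X, w x * ∑ y ∈ Finset.univ.filter (fun y => y ≠ x),
        (-Qθ x y + Qpre x y + Qθ x y * Real.log (Qθ x y / Qpre x y)) =
      γ * ∑ x ∈ Finset.univ.filter (fun x => x ≠ M),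
        w x * (-sθ x + spre x + sθ x * Real.log (sθ x / spre x)) :=
  drakes_masked_kl_simplification_general M γ hγ sθ spre c Qθ Qpre hQθM hQpreM hQθ hQpre w
end

section
/- Let X be a finite nonempty type, T ∈ ℝ, and Q : ℝ → X → X → ℝ a time-dependent rate family. Suppose j : ℝ → X → ℝ satisfies the Kolmogorov forward equation for Q on [0, T] and j t x > 0 for all t ∈ [0, T] and x ∈ X. Define the time-reversal rate family Q̄ : ℝ → X → X → ℝ by Q̄ t x y = (j t y / j t x) · Q t y x for x ≠ y. Then the reversed marginals j̄ t x := j (T − t) x satisfy, for every t ∈ [0, T] and x ∈ X: the function s ↦ j̄ s x is differentiable at t with derivative (∑_{y ≠ x} Q̄ (T − t) y x · j̄ t y) − (∑_{y ≠ x} Q̄ (T − t) x y · j̄ t x). (Time-reversal formula for continuous-time Markov chains, equation (2).) -/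
open Finset Set

/-- The right-hand side of the Kolmogorov forward equation at a single time. -/
noncomputable def netInflow {X : Type*} [Fintype X] [DecidableEq X]
    (Q : X → X → ℝ) (p : X → ℝ) (x : X) : ℝ :=
  (∑ y ∈ univ.filter (fun y => y ≠ x), Q y x * p y) -
    ∑ y ∈ univ.filter (fun y => y ≠ x), Q x y * p x

/-- The reversed rates swap the flux `Q y x * p y` along each edge with the opposite one, so
inflow and outflow trade places. -/
theorem netInflow_of_reversedRates {X : Type*} [Fintype X] [DecidableEq X]
    (Q Qbar : X → X → ℝ) (p : X → ℝ) (hp : ∀ x, p x ≠ 0)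
    (hQbar : ∀ x y, x ≠ y → Qbar x y = (p y / p x) * Q y x) (x : X) :
    netInflow Qbar p x = -netInflow Q p x := by
  have hflux : ∀ a b, a ≠ b → Qbar a b * p a = Q b a * p b := fun a b hab => by
    rw [hQbar a b hab]
    field_simp [hp a]
  have hin : ∀ y ∈ univ.filter (fun y => y ≠ x), Qbar y x * p y = Q x y * p x :=
    fun y hy => hflux y x (mem_filter.mp hy).2
  have hout : ∀ y ∈ univ.filter (fun y => y ≠ x), Qbar x y * p x = Q y x * p y :=
    fun y hy => hflux x y (mem_filter.mp hy).2.symm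
  rw [netInflow, netInflow, sum_congr rfl hin, sum_congr rfl hout]
  ring

theorem drakes_ctmc_time_reversal_general
    {X : Type*} [Fintype X] [DecidableEq X]
    (T : ℝ) (Q : ℝ → X → X → ℝ) (j : ℝ → X → ℝ)
    (hfwd : ∀ t ∈ Set.Icc (0 : ℝ) T, ∀ x : X, HasDerivAt (fun s => j s x)
      ((∑ y ∈ Finset.univ.filter (fun y => y ≠ x), Q t y x * j t y) -
        ∑ y ∈ Finset.univ.filter (fun y => y ≠ x), Q t x y * j t x) t)
    (hpos : ∀ t ∈ Set.Icc (0 : ℝ) T, ∀ x : X, 0 < j t x)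
    (Qbar : ℝ → X → X → ℝ)
    (hQbar : ∀ t : ℝ, ∀ x y : X, x ≠ y → Qbar t x y = (j t y / j t x) * Q t y x) :
    ∀ t ∈ Set.Icc (0 : ℝ) T, ∀ x : X, HasDerivAt (fun s => j (T - s) x)
      ((∑ y ∈ Finset.univ.filter (fun y => y ≠ x), Qbar (T - t) y x * j (T - t) y) -
        ∑ y ∈ Finset.univ.filter (fun y => y ≠ x), Qbar (T - t) x y * j (T - t) x) t := by
  intro t ht x
  have hrev : T - t ∈ Icc 0 T := ⟨by linarith [ht.2], by linarith [ht.1]⟩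
  have hreversed :
      netInflow (Qbar (T - t)) (j (T - t)) x = -netInflow (Q (T - t)) (j (T - t)) x :=
    netInflow_of_reversedRates _ _ _ (fun y => (hpos _ hrev y).ne') (hQbar (T - t)) x
  have hderiv : HasDerivAt (fun s => j (T - s) x) (-netInflow (Q (T - t)) (j (T - t)) x) t :=
    (hfwd (T - t) hrev x).comp_const_sub T t
  rw [← hreversed] at hderiv
  exact hderiv

/-- Time-reversal formula for continuous-time Markov chains (equation (2)): if `j`
satisfies the Kolmogorov forward equation for `Q` on `[0, T]` and is positive there,
then the reversed marginals `t ↦ j (T − t) x` satisfy the Kolmogorov forward equation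
for the time-reversal rate family `Q̄ t x y = (j t y / j t x) · Q t y x` (for `x ≠ y`),
evaluated at time `T − t`. -/
theorem drakes_ctmc_time_reversal
    {X : Type*} [Fintype X] [Nonempty X] [DecidableEq X]
    (T : ℝ) (Q : ℝ → X → X → ℝ) (j : ℝ → X → ℝ)
    (hfwd : ∀ t ∈ Set.Icc (0 : ℝ) T, ∀ x : X, HasDerivAt (fun s => j s x)
      ((∑ y ∈ Finset.univ.filter (fun y => y ≠ x), Q t y x * j t y) -
        ∑ y ∈ Finset.univ.filter (fun y => y ≠ x), Q t x y * j t x) t)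
    (hpos : ∀ t ∈ Set.Icc (0 : ℝ) T, ∀ x : X, 0 < j t x)
    (Qbar : ℝ → X → X → ℝ)
    (hQbar : ∀ t : ℝ, ∀ x y : X, x ≠ y → Qbar t x y = (j t y / j t x) * Q t y x) :
    ∀ t ∈ Set.Icc (0 : ℝ) T, ∀ x : X, HasDerivAt (fun s => j (T - s) x)
      ((∑ y ∈ Finset.univ.filter (fun y => y ≠ x), Qbar (T - t) y x * j (T - t) y) -
        ∑ y ∈ Finset.univ.filter (fun y => y ≠ x), Qbar (T - t) x y * j (T - t) x) t :=
  drakes_ctmc_time_reversal_general T Q j hfwd hpos Qbar hQbar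
end

section
/- Let μ be the standard Gumbel probability measure on ℝ, i.e., the Borel probability measure with cumulative distribution function x ↦ exp(−exp(−x)) (equivalently, with density x ↦ exp(−x − exp(−x)) with respect to Lebesgue measure). Let Y be a finite nonempty type, π : Y → ℝ with π y > 0 for all y, and let k ∈ Y. Then, under the product measure ⨂_{y ∈ Y} μ on functions g : Y → ℝ, the probability of the event {g | for all y ≠ k, log(π k) + g k > log(π y) + g y} equals π k / ∑_{y ∈ Y} π y. (The Gumbel-max trick: sampling from a categorical distribution reduces to an argmax over Gumbel-perturbed log-weights, underpinning Stage 1 of DRAKES.) -/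
/-!
Conditioning on `g k = x`, each other coordinate must fall below `x + log (w k) - log (w y)`,
which under the Gumbel CDF has probability `exp (-(w y / w k) e^{-x})`. Hence the event has
probability `∫ exp (-r e^{-x}) dμ(x)` with `r = (∑ y, w y - w k) / w k`. Against the Gumbel
density `e^{-x} exp (-e^{-x})` the substitution `u = e^{-x}` turns this into
`∫_0^∞ e^{-(1 + r) u} du = 1 / (1 + r) = w k / ∑ y, w y`.
-/

open Real Finset MeasureTheory Set
open scoped ENNReal

theorem MeasureTheory.Measure.pi_setOf_forall_ne_add_lt_add {ι : Type*} [Fintype ι]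
    [DecidableEq ι] (μ : Measure ℝ) [SigmaFinite μ] (a : ι → ℝ) (k : ι) :
    Measure.pi (fun _ : ι => μ) {g | ∀ y, y ≠ k → a y + g y < a k + g k}
      = ∫⁻ x, ∏ y : {y // y ≠ k}, μ (Iio (a k + x - a y)) ∂μ := by
  let e := MeasurableEquiv.piEquivPiSubtypeProd (fun _ : ι => ℝ) (· = k)
  let S : Set (({y // y = k} → ℝ) × ({y // y ≠ k} → ℝ)) :=
    {q | ∀ y : {y // y ≠ k}, a y + q.2 y < a k + q.1 default}
  have hS : MeasurableSet S := by
    simp only [S, ofPred_forall]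
    exact .iInter fun y => measurableSet_lt (by fun_prop) (by fun_prop)
  have hslice (q₁ : {y // y = k} → ℝ) :
      Prod.mk q₁ ⁻¹' S = univ.pi fun y : {y // y ≠ k} => Iio (a k + q₁ default - a y) := by
    ext q₂
    simp [S, lt_sub_iff_add_lt']
  have hpre : {g : ι → ℝ | ∀ y, y ≠ k → a y + g y < a k + g k} = e ⁻¹' S := by
    ext g
    simp only [ne_eq, mem_ofPred_eq, MeasurableEquiv.piEquivPiSubtypeProd_apply,
      Subtype.forall, preimage_ofPred_eq, e, S]
    rfl
  rw [hpre, (measurePreserving_piEquivPiSubtypeProd _ _).measure_preimage hS.nullMeasurableSet,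
    Measure.prod_apply hS]
  simp only [hslice, Measure.pi_pi]
  -- `piEquivPiSubtypeProd` equips `{y // y = k}` with `Subtype.fintype`, not `Fintype.subtypeEq`
  let _ : Fintype {y // y = k} := Subtype.fintype _
  exact (measurePreserving_piUnique fun _ => μ).lintegral_comp_emb
    (MeasurableEquiv.piUnique _).measurableEmbedding
    (fun x => ∏ y : {y // y ≠ k}, μ (Iio (a k + x - a y)))

theorem lintegral_Ioi_exp_neg_mul {s : ℝ} (hs : 0 < s) (c : ℝ) :
    ∫⁻ u in Ioi c, ENNReal.ofReal (exp (-(s * u))) = ENNReal.ofReal (exp (-(s * c)) / s) := by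
  have hint := integral_exp_mul_Ioi (neg_neg_of_pos hs) c
  simp only [neg_mul, neg_div_neg_eq] at hint
  rw [← ofReal_integral_eq_lintegral_ofReal, hint]
  · have hintegrable := integrableOn_exp_mul_Ioi (neg_neg_of_pos hs) c
    simp only [neg_mul] at hintegrable
    exact hintegrable
  · exact ae_of_all _ fun u => (exp_pos _).le

theorem setLIntegral_exp_neg_mul_comp_exp_neg {A : Set ℝ} (hA : MeasurableSet A)
    (f : ℝ → ℝ≥0∞) :
    ∫⁻ x in A, ENNReal.ofReal (exp (-x)) * f (exp (-x))
      = ∫⁻ u in (fun x => exp (-x)) '' A, f u := by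
  have hderiv (x : ℝ) : HasDerivAt (fun x => exp (-x)) (-exp (-x)) x := by
    simpa using (hasDerivAt_neg x).exp
  rw [lintegral_image_eq_lintegral_abs_deriv_mul hA (fun x _ => (hderiv x).hasDerivWithinAt)
    (exp_injective.comp neg_injective).injOn]
  simp [abs_of_pos (exp_pos _)]

theorem image_exp_neg_Iic (a : ℝ) : (fun x => exp (-x)) '' Iic a = Ici (exp (-a)) := by
  rw [← image_exp_Ici, ← image_neg_Iic, image_image]

theorem range_exp_neg : range (fun x => exp (-x)) = Set.Ioi (0 : ℝ) := by
  rw [← range_exp]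
  exact neg_surjective.range_comp exp

noncomputable def gumbelDensity (x : ℝ) : ℝ≥0∞ :=
  ENNReal.ofReal (exp (-x)) * ENNReal.ofReal (exp (-exp (-x)))

theorem eq_withDensity_gumbelDensity_of_cdf {μ : Measure ℝ} [IsFiniteMeasure μ]
    (hμ : ∀ x, μ (Iic x) = ENNReal.ofReal (exp (-exp (-x)))) :
    μ = volume.withDensity gumbelDensity := by
  refine Measure.ext_of_Iic _ _ fun a => ?_
  have htail := lintegral_Ioi_exp_neg_mul one_pos (exp (-a))
  simp only [one_mul, div_one] at htail
  rw [hμ, withDensity_apply _ measurableSet_Iic, ← htail, setLIntegral_congr Ioi_ae_eq_Ici,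
    ← image_exp_neg_Iic]
  exact (setLIntegral_exp_neg_mul_comp_exp_neg measurableSet_Iic
    fun u => .ofReal (exp (-u))).symm

theorem measure_Iio_of_gumbel_cdf {μ : Measure ℝ} [IsFiniteMeasure μ]
    (hμ : ∀ x, μ (Iic x) = ENNReal.ofReal (exp (-exp (-x)))) (t : ℝ) :
    μ (Iio t) = ENNReal.ofReal (exp (-exp (-t))) := by
  have : NullSingletonClass μ := by
    rw [eq_withDensity_gumbelDensity_of_cdf hμ]
    infer_instance
  rw [measure_congr Iio_ae_eq_Iic, hμ]

theorem lintegral_exp_neg_mul_exp_neg_of_gumbel_cdf {μ : Measure ℝ} [IsFiniteMeasure μ]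
    (hμ : ∀ x, μ (Iic x) = ENNReal.ofReal (exp (-exp (-x)))) {s : ℝ} (hs : 0 ≤ s) :
    ∫⁻ x, ENNReal.ofReal (exp (-(s * exp (-x)))) ∂μ = ENNReal.ofReal (1 / (1 + s)) := by
  have hmul (x : ℝ) : gumbelDensity x * ENNReal.ofReal (exp (-(s * exp (-x))))
      = ENNReal.ofReal (exp (-x)) * ENNReal.ofReal (exp (-((1 + s) * exp (-x)))) := by
    rw [gumbelDensity, mul_assoc, ← ENNReal.ofReal_mul (exp_pos _).le, ← exp_add]
    ring_nf
  rw [eq_withDensity_gumbelDensity_of_cdf hμ,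
    lintegral_withDensity_eq_lintegral_mul _ (by unfold gumbelDensity; fun_prop) (by fun_prop)]
  simp only [Pi.mul_apply, hmul]
  rw [← setLIntegral_univ, setLIntegral_exp_neg_mul_comp_exp_neg MeasurableSet.univ
    (fun u => .ofReal (exp (-((1 + s) * u)))), image_univ, range_exp_neg,
    lintegral_Ioi_exp_neg_mul (by linarith) 0]
  simp

theorem exp_neg_log_add_sub_log {a b : ℝ} (ha : 0 < a) (hb : 0 < b) (x : ℝ) :
    exp (-(log a + x - log b)) = b / a * exp (-x) := by
  rw [show -(log a + x - log b) = log b - log a + -x by ring, exp_add, exp_sub, exp_log ha,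
    exp_log hb]

theorem prod_measure_Iio_log_add_sub_log_of_gumbel_cdf {ι : Type*} {μ : Measure ℝ}
    [IsFiniteMeasure μ] (hμ : ∀ x, μ (Iic x) = ENNReal.ofReal (exp (-exp (-x))))
    {a : ℝ} (ha : 0 < a) {b : ι → ℝ} (hb : ∀ y, 0 < b y) (s : Finset ι) (x : ℝ) :
    ∏ y ∈ s, μ (Iio (log a + x - log (b y)))
      = ENNReal.ofReal (exp (-((∑ y ∈ s, b y) / a * exp (-x)))) := by
  simp only [measure_Iio_of_gumbel_cdf hμ, exp_neg_log_add_sub_log ha (hb _)]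
  rw [← ENNReal.ofReal_prod_of_nonneg fun _ _ => (exp_pos _).le, ← exp_sum, sum_neg_distrib,
    ← sum_mul, ← sum_div]

theorem drakes_gumbel_max_trick_general
    {Y : Type*} [Fintype Y] [DecidableEq Y]
    (μ : Measure ℝ) [IsProbabilityMeasure μ]
    (hμ : ∀ x : ℝ, μ (Set.Iic x) = ENNReal.ofReal (Real.exp (-Real.exp (-x))))
    (w : Y → ℝ) (hw : ∀ y, 0 < w y) (k : Y) :
    Measure.pi (fun _ : Y => μ)
        {g : Y → ℝ | ∀ y : Y, y ≠ k → Real.log (w y) + g y < Real.log (w k) + g k}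
      = ENNReal.ofReal (w k / ∑ y : Y, w y) := by
  have hrest : ∑ y : {y // y ≠ k}, w y = ∑ y, w y - w k := by
    rw [Fintype.sum_eq_add_sum_subtype_ne w k, add_sub_cancel_left]
  have hrest_nonneg : 0 ≤ (∑ y, w y - w k) / w k := by
    rw [← hrest]
    exact div_nonneg (sum_nonneg fun y _ => (hw y).le) (hw k).le
  rw [Measure.pi_setOf_forall_ne_add_lt_add μ (fun y => log (w y)) k]
  simp only [prod_measure_Iio_log_add_sub_log_of_gumbel_cdf hμ (hw k)
    fun y : {y // y ≠ k} => hw y, hrest]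
  rw [lintegral_exp_neg_mul_exp_neg_of_gumbel_cdf hμ hrest_nonneg]
  congr 1
  field_simp [(hw k).ne']
  ring

/-- The Gumbel-max trick (Stage 1 of DRAKES): if `μ` is the standard Gumbel probability
measure on `ℝ` (CDF `x ↦ exp (−exp (−x))`), `w : Y → ℝ` is a positive weight vector
(`w` plays the role of `π` in the paper) on a finite nonempty type `Y`, and `g : Y → ℝ`
is drawn from the product measure `⨂_y μ`, then the probability that
`log (w k) + g k` strictly exceeds `log (w y) + g y` for all `y ≠ k` equals
`w k / ∑ y, w y`. -/
theorem drakes_gumbel_max_trick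
    {Y : Type*} [Fintype Y] [Nonempty Y] [DecidableEq Y]
    (μ : Measure ℝ) [IsProbabilityMeasure μ]
    (hμ : ∀ x : ℝ, μ (Set.Iic x) = ENNReal.ofReal (Real.exp (-Real.exp (-x))))
    (w : Y → ℝ) (hw : ∀ y, 0 < w y) (k : Y) :
    Measure.pi (fun _ : Y => μ)
        {g : Y → ℝ | ∀ y : Y, y ≠ k → Real.log (w y) + g y < Real.log (w k) + g k}
      = ENNReal.ofReal (w k / ∑ y : Y, w y) :=
  drakes_gumbel_max_trick_general μ hμ w hw k
end
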